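/- arXiv:2410.04430 — 2 statements merged into one kernel-verified Lean document; each statement's English description precedes it below -/
import Mathlib

section
/- Let ρ_CQ be a two-qubit classical–quantum state, ρ_CQ = p₀ |0⟩⟨0|⊗ρ₀ + p₁ |1⟩⟨1|⊗ρ₁ (in some orthonormal basis of qubit A). Then for arbitrary qubit POVM observables A_x = M^A_{0|x} − M^A_{1|x} (x = 0,1) and B_y = M^B_{0|y} − M^B_{1|y} (y = 0,1), the covariances cov(A_x, B_y) = ⟨A_x⊗B_y⟩ − ⟨A_x⟩⟨B_y⟩ factorize as cov(A_x, B_y) = α_x β_y for real numbers α_x (depending only on x and ρ_CQ's A-marginal data) and β_y (depending only on y). Consequently the 2×2 covariance matrix (cov(A_x,B_y))_{x,y} has rank at most 1. -/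
open Matrix Kronecker
open scoped BigOperators ComplexOrder

private lemma trace_mul_herm_real {n : Type*} [Fintype n] (H K : Matrix n n ℂ)
    (hH : H.IsHermitian) (hK : K.IsHermitian) :
    (((H * K).trace).re : ℂ) = (H * K).trace := by
  rw [← Complex.conj_eq_iff_re]
  calc (starRingEnd ℂ) ((H * K).trace) = ((H * K)ᴴ).trace := by
        rw [Matrix.trace_conjTranspose]; rfl
    _ = (Kᴴ * Hᴴ).trace := by rw [Matrix.conjTranspose_mul]
    _ = (H * K).trace := by rw [hK.eq, hH.eq, Matrix.trace_mul_comm]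

/-- for a two-qubit classical–quantum state, the covariances of arbitrary
dichotomic POVM observables factorize as cov(A_x,B_y) = α_x β_y; hence the covariance
matrix has rank at most 1. -/
theorem CQ_covariance_factorizes
    (e : Fin 2 → (Fin 2 → ℂ))
    (he : ∀ i i', (star (e i)) ⬝ᵥ (e i') = if i = i' then 1 else 0)
    (p : Fin 2 → ℝ) (hp : ∀ i, 0 ≤ p i) (hpsum : ∑ i, p i = 1)
    (ρB : Fin 2 → Matrix (Fin 2) (Fin 2) ℂ)
    (hρB : ∀ i, (ρB i).PosSemidef ∧ (ρB i).trace = 1)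
    (ρCQ : Matrix (Fin 2 × Fin 2) (Fin 2 × Fin 2) ℂ)
    (hρCQ : ρCQ = ∑ i, (p i : ℂ) • (vecMulVec (e i) (star (e i)) ⊗ₖ ρB i))
    (MA MB : Fin 2 → Fin 2 → Matrix (Fin 2) (Fin 2) ℂ)
    (hMA : ∀ x, (∀ a, (MA x a).PosSemidef) ∧ MA x 0 + MA x 1 = 1)
    (hMB : ∀ y, (∀ b, (MB y b).PosSemidef) ∧ MB y 0 + MB y 1 = 1)
    (A B : Fin 2 → Matrix (Fin 2) (Fin 2) ℂ)
    (hA : ∀ x, A x = MA x 0 - MA x 1) (hB : ∀ y, B y = MB y 0 - MB y 1)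
    (cov : Fin 2 → Fin 2 → ℝ)
    (hcov : ∀ x y, cov x y = (((A x ⊗ₖ B y) * ρCQ).trace).re
      - (((A x ⊗ₖ (1 : Matrix (Fin 2) (Fin 2) ℂ)) * ρCQ).trace).re
        * ((((1 : Matrix (Fin 2) (Fin 2) ℂ) ⊗ₖ B y) * ρCQ).trace).re) :
    (∃ α β : Fin 2 → ℝ, ∀ x y, cov x y = α x * β y)
    ∧ (Matrix.of cov).rank ≤ 1 := by
  set P : Fin 2 → Matrix (Fin 2) (Fin 2) ℂ := fun i => vecMulVec (e i) (star (e i)) with hP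
  -- Hermiticity facts
  have hAh : ∀ x, (A x).IsHermitian := fun x => by
    rw [hA x]; exact ((hMA x).1 0).1.sub ((hMA x).1 1).1
  have hBh : ∀ y, (B y).IsHermitian := fun y => by
    rw [hB y]; exact ((hMB y).1 0).1.sub ((hMB y).1 1).1
  have hPh : ∀ i, (P i).IsHermitian := fun i => by
    ext j k
    simp [hP, Matrix.conjTranspose_apply, Matrix.vecMulVec_apply, mul_comm]
  have hρh : ∀ i, (ρB i).IsHermitian := fun i => (hρB i).1.1
  -- traces of P i
  have hPtr : ∀ i, (P i).trace = 1 := by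
    intro i
    have h := he i i
    simp only [if_true, eq_self_iff_true] at h
    rw [← h]
    simp [hP, Matrix.trace, Matrix.diag, Matrix.vecMulVec_apply, dotProduct, mul_comm]
  -- real scalars
  set t : Fin 2 → Fin 2 → ℝ := fun x i => ((A x * P i).trace).re with ht
  set s : Fin 2 → Fin 2 → ℝ := fun y i => ((B y * ρB i).trace).re with hs
  have htC : ∀ x i, (A x * P i).trace = ((t x i : ℝ) : ℂ) := fun x i =>
    (trace_mul_herm_real _ _ (hAh x) (hPh i)).symm
  have hsC : ∀ y i, (B y * ρB i).trace = ((s y i : ℝ) : ℂ) := fun y i =>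
    (trace_mul_herm_real _ _ (hBh y) (hρh i)).symm
  -- generic expansion of trace(M * ρCQ)
  have hexp : ∀ (X Y : Matrix (Fin 2) (Fin 2) ℂ),
      ((X ⊗ₖ Y) * ρCQ).trace = ∑ i, (p i : ℂ) * ((X * P i).trace * (Y * ρB i).trace) := by
    intro X Y
    rw [hρCQ, Finset.mul_sum, Matrix.trace_sum]
    refine Finset.sum_congr rfl fun i _ => ?_
    rw [Matrix.mul_smul, Matrix.trace_smul, ← Matrix.mul_kronecker_mul,
      Matrix.trace_kronecker]
    rfl
  have E1 : ∀ x y, ((A x ⊗ₖ B y) * ρCQ).trace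
      = ((p 0 * (t x 0 * s y 0) + p 1 * (t x 1 * s y 1) : ℝ) : ℂ) := by
    intro x y
    rw [hexp, Fin.sum_univ_two, htC, htC, hsC, hsC]
    push_cast
    ring
  have E2 : ∀ x, ((A x ⊗ₖ (1 : Matrix (Fin 2) (Fin 2) ℂ)) * ρCQ).trace
      = ((p 0 * t x 0 + p 1 * t x 1 : ℝ) : ℂ) := by
    intro x
    rw [hexp, Fin.sum_univ_two, htC, htC]
    rw [Matrix.one_mul, Matrix.one_mul, (hρB 0).2, (hρB 1).2]
    push_cast
    ring
  have E3 : ∀ y, (((1 : Matrix (Fin 2) (Fin 2) ℂ) ⊗ₖ B y) * ρCQ).trace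
      = ((p 0 * s y 0 + p 1 * s y 1 : ℝ) : ℂ) := by
    intro y
    rw [hexp, Fin.sum_univ_two, hsC, hsC]
    rw [Matrix.one_mul, Matrix.one_mul, hPtr, hPtr]
    push_cast
    ring
  have hps : p 0 + p 1 = 1 := by rw [← hpsum, Fin.sum_univ_two]
  set α : Fin 2 → ℝ := fun x => p 0 * p 1 * (t x 0 - t x 1) with hα
  set β : Fin 2 → ℝ := fun y => s y 0 - s y 1 with hβ
  have key : ∀ x y, cov x y = α x * β y := by
    intro x y
    rw [hcov x y, E1, E2, E3, Complex.ofReal_re, Complex.ofReal_re, Complex.ofReal_re,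
      hα, hβ]
    have h1 : p 1 = 1 - p 0 := by linarith
    rw [h1]; ring
  refine ⟨⟨α, β, key⟩, ?_⟩
  have hof : Matrix.of cov = vecMulVec α β := by
    ext x y
    simp [Matrix.vecMulVec_apply, key x y]
  rw [hof, Matrix.vecMulVec_eq (Fin 1)]
  calc (Matrix.replicateCol (Fin 1) α * Matrix.replicateRow (Fin 1) β).rank
      ≤ (Matrix.replicateCol (Fin 1) α).rank := Matrix.rank_mul_le_left _ _
    _ ≤ Fintype.card (Fin 1) := Matrix.rank_le_card_width _
    _ = 1 := rfl
end

section
/- For the two-qubit state ρ = (1/4)(𝟙⊗𝟙 + 0.4 σ₁⊗𝟙 + 0.4(𝟙⊗σ₁ − 𝟙⊗σ₃) + 0.2 σ₃⊗σ₃): (i) ρ is a positive semidefinite operator of trace 1, hence a valid state; (ii) its correlation rank satisfies L_R(ρ) = 3 > 2, so ρ is superseparable. -/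
open Matrix Kronecker
open scoped BigOperators ComplexOrder

/-- The Pauli basis σ₀ = 𝟙₂, σ₁, σ₂, σ₃. -/
noncomputable def pauli : Fin 4 → Matrix (Fin 2) (Fin 2) ℂ :=
  ![1, !![0, 1; 1, 0], !![0, -Complex.I; Complex.I, 0], !![1, 0; 0, -1]]

/-- The 4×4 real matrix of coefficients r_{nm} in the Pauli expansion
ρ = Σ_{n,m} r_{nm} σ_n ⊗ σ_m, i.e. r_{nm} = Re tr((σ_n ⊗ σ_m) ρ)/4. -/
noncomputable def pauliCorrMatrix
    (ρ : Matrix (Fin 2 × Fin 2) (Fin 2 × Fin 2) ℂ) : Matrix (Fin 4) (Fin 4) ℝ :=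
  Matrix.of fun n m => (((pauli n ⊗ₖ pauli m) * ρ).trace).re / 4

/-- The state ρ = (1/4)(𝟙⊗𝟙 + 0.4 σ₁⊗𝟙 + 0.4(𝟙⊗σ₁ − 𝟙⊗σ₃) + 0.2 σ₃⊗σ₃). -/
noncomputable def giorgiState : Matrix (Fin 2 × Fin 2) (Fin 2 × Fin 2) ℂ :=
  ((1 : ℂ) / 4) • ((1 : Matrix (Fin 2 × Fin 2) (Fin 2 × Fin 2) ℂ)
    + ((2 : ℂ) / 5) • (pauli 1 ⊗ₖ (1 : Matrix (Fin 2) (Fin 2) ℂ))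
    + ((2 : ℂ) / 5) • (((1 : Matrix (Fin 2) (Fin 2) ℂ) ⊗ₖ pauli 1)
        - ((1 : Matrix (Fin 2) (Fin 2) ℂ) ⊗ₖ pauli 3))
    + ((1 : ℂ) / 5) • (pauli 3 ⊗ₖ pauli 3))

/-! Orthogonality of the Pauli matrices, `tr (σₙ σₖ) = 2 δₙₖ`, recovers the coefficient matrix `r`
of a Pauli expansion as `pauliCorrMatrix`. For `giorgiState` that matrix has a zero row, so its
rank is at most 3, and the rows and columns `0, 1, 3` form an invertible minor, so it is at least 3.
Positivity comes from an `LDLᴴ` factorization of `20 ρ` in the computational basis, with diagonal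
`(4, 5, 4/5, 0)`. -/

lemma trace_pauli_mul_pauli (n k : Fin 4) :
    (pauli n * pauli k).trace = if n = k then 2 else 0 := by
  fin_cases n <;> fin_cases k <;> simp [pauli, trace_fin_two] <;> norm_num

lemma trace_pauli (n : Fin 4) : (pauli n).trace = if n = 0 then 2 else 0 := by
  simpa [pauli] using trace_pauli_mul_pauli n 0

noncomputable def pauliExpansion (r : Matrix (Fin 4) (Fin 4) ℝ) :
    Matrix (Fin 2 × Fin 2) (Fin 2 × Fin 2) ℂ :=
  ∑ n, ∑ m, (r n m : ℂ) • (pauli n ⊗ₖ pauli m)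

lemma trace_pauliExpansion (r : Matrix (Fin 4) (Fin 4) ℝ) :
    (pauliExpansion r).trace = 4 * r 0 0 := by
  simp [pauliExpansion, trace_sum, trace_kronecker, trace_pauli]
  ring

theorem pauliCorrMatrix_pauliExpansion (r : Matrix (Fin 4) (Fin 4) ℝ) :
    pauliCorrMatrix (pauliExpansion r) = r := by
  ext n m
  simp [pauliCorrMatrix, pauliExpansion, Finset.mul_sum, trace_sum, ← mul_kronecker_mul,
    trace_kronecker, trace_pauli_mul_pauli]
  ring

noncomputable def giorgiCorr : Matrix (Fin 4) (Fin 4) ℝ :=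
  !![1/4, 1/10, 0, -1/10; 1/10, 0, 0, 0; 0, 0, 0, 0; 0, 0, 0, 1/20]

lemma giorgiState_eq_pauliExpansion : giorgiState = pauliExpansion giorgiCorr := by
  have hσ₀ : pauli 0 = 1 := rfl
  simp [giorgiState, pauliExpansion, giorgiCorr, Fin.sum_univ_four, hσ₀]
  module

lemma rank_giorgiCorr : giorgiCorr.rank = 3 := by
  apply le_antisymm
  · refine (rank_le_card_of_support_subset _ {0, 1, 3} fun i hi => ?_).trans (by decide)
    fin_cases i <;> simp_all [giorgiCorr]
  · have hminor : giorgiCorr.submatrix ![0, 1, 3] ![0, 1, 3] =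
        !![1/4, 1/10, -1/10; 1/10, 0, 0; 0, 0, 1/20] := by
      ext i j
      fin_cases i <;> fin_cases j <;> rfl
    have hdet :
        (!![1/4, 1/10, -1/10; 1/10, 0, 0; 0, 0, 1/20] : Matrix (Fin 3) (Fin 3) ℝ).det ≠ 0 := by
      simp [det_fin_three, cons_val_two, vecHead, vecTail]
    calc 3 = (giorgiCorr.submatrix ![0, 1, 3] ![0, 1, 3]).rank := by
          rw [hminor, rank_of_det_ne_zero hdet, Fintype.card_fin]
      _ ≤ giorgiCorr.rank := rank_submatrix_le _ _ _

/-- `20 ρ` in the basis `|00⟩, |01⟩, |10⟩, |11⟩`, the order given by `finProdFinEquiv`. -/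
noncomputable def giorgiMatrix : Matrix (Fin 4) (Fin 4) ℂ :=
  !![4, 2, 2, 0; 2, 6, 0, 2; 2, 0, 2, 2; 0, 2, 2, 8]

noncomputable def giorgiLDLFactor : Matrix (Fin 4) (Fin 4) ℂ :=
  !![1, 0, 0, 0; 1/2, 1, 0, 0; 1/2, -1/5, 1, 0; 0, 2/5, 3, 1]

lemma giorgiState_eq_submatrix :
    giorgiState = ((20 : ℂ)⁻¹ • giorgiMatrix).submatrix finProdFinEquiv finProdFinEquiv := by
  ext ⟨i, j⟩ ⟨k, l⟩
  fin_cases i <;> fin_cases j <;> fin_cases k <;> fin_cases l <;>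
    simp [giorgiState, giorgiMatrix, pauli, one_apply, finProdFinEquiv] <;> norm_num

lemma giorgiMatrix_eq_LDL :
    giorgiMatrix = giorgiLDLFactor * diagonal ![4, 5, 4/5, 0] * giorgiLDLFactorᴴ := by
  ext i j
  simp only [mul_apply, Fin.sum_univ_four, diagonal_apply, conjTranspose_apply]
  fin_cases i <;> fin_cases j <;> simp [giorgiMatrix, giorgiLDLFactor] <;> norm_num

lemma giorgiState_posSemidef : giorgiState.PosSemidef := by
  rw [giorgiState_eq_submatrix, giorgiMatrix_eq_LDL]
  have hD : (diagonal ![(4 : ℂ), 5, 4/5, 0]).PosSemidef := by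
    refine posSemidef_diagonal_iff.mpr fun i => ?_
    fin_cases i <;> norm_num [Complex.le_def]
  exact ((hD.mul_mul_conjTranspose_same _).smul (by norm_num [Complex.le_def])).submatrix _

/-- the state above is a valid state (positive semidefinite with unit trace)
and has correlation rank L_R = 3 > 2, hence it is superseparable. -/
theorem giorgiState_valid_and_corrRank_three :
    giorgiState.PosSemidef ∧ giorgiState.trace = 1
    ∧ (pauliCorrMatrix giorgiState).rank = 3
    ∧ 2 < (pauliCorrMatrix giorgiState).rank := by
  have hrank : (pauliCorrMatrix giorgiState).rank = 3 := by
    rw [giorgiState_eq_pauliExpansion, pauliCorrMatrix_pauliExpansion, rank_giorgiCorr]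
  refine ⟨giorgiState_posSemidef, ?_, hrank, by omega⟩
  rw [giorgiState_eq_pauliExpansion, trace_pauliExpansion]
  norm_num [giorgiCorr]
end
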